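/- Let R be a Prüfer domain and M a branched maximal ideal that is idempotent and the radical of a finitely generated ideal. Then M is not divisorial, but there exists a proper M-primary ideal of R that is divisorial. -/

import Mathlib

/-- An ideal is divisorial if `I = (R : (R : I))`, phrased via fractional ideals. -/
def IsDivisorial (R : Type*) [CommRing R] [IsDomain R] (I : Ideal R) : Prop :=
  (1 / (1 / (I : FractionalIdeal (nonZeroDivisors R) (FractionRing R))) :
    FractionalIdeal (nonZeroDivisors R) (FractionRing R))
    = (I : FractionalIdeal (nonZeroDivisors R) (FractionRing R))

/-- An ideal is invertible if it is a unit as a fractional ideal. -/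
def IsInvertibleIdeal (R : Type*) [CommRing R] [IsDomain R] (I : Ideal R) : Prop :=
  IsUnit (I : FractionalIdeal (nonZeroDivisors R) (FractionRing R))

/-- A Prüfer domain: every nonzero finitely generated ideal is invertible. -/
def IsPrufer (R : Type*) [CommRing R] [IsDomain R] : Prop :=
  ∀ I : Ideal R, I ≠ ⊥ → I.FG → IsInvertibleIdeal R I

/-- A prime `P` is sharp if it contains a finitely generated ideal contained
only in the maximal ideals that contain `P`. -/
def IsSharp (R : Type*) [CommRing R] (P : Ideal R) : Prop :=
  ∃ I : Ideal R, I.FG ∧ I ≤ P ∧ ∀ M : Ideal R, M.IsMaximal → I ≤ M → P ≤ M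

/-!
For `x ∈ (R : M)` the fractional ideal `I = R + Rx` is, up to a principal factor, the
finitely generated ideal `(s, a)` where `x = a / s`, hence invertible in a Prüfer domain.
From `MI ⊆ R` we get `M ⊆ I⁻¹ ⊆ R`, so `I⁻¹` is `M` or `R` by maximality. The first case
would make `M` invertible, impossible for a proper idempotent ideal; so `I = R` and `x ∈ R`.
Thus `(R : M) = R` and `M` is not divisorial, whereas the finitely generated ideal `B` with
`√B = M` is an invertible, hence divisorial, `M`-primary ideal, and `B ≠ M` since `B` is
invertible and `M` is not.
-/

open FractionalIdeal
open scoped nonZeroDivisors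

section

variable {R : Type*} [CommRing R]

local notation "K" => FractionRing R

theorem FractionalIdeal.eq_coeIdeal_or_eq_one_of_le {M : Ideal R} (hM : M.IsMaximal)
    {J : FractionalIdeal R⁰ K} (hMJ : (M : FractionalIdeal R⁰ K) ≤ J) (hJ : J ≤ 1) :
    J = M ∨ J = 1 := by
  obtain ⟨J, rfl⟩ := le_one_iff_exists_coeIdeal.1 hJ
  rw [coeIdeal_le_coeIdeal] at hMJ
  rcases eq_or_ne J ⊤ with h | h
  · exact .inr (by rw [h, coeIdeal_top])
  · exact .inl (congrArg _ (hM.eq_of_le h hMJ).symm)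

variable [IsDomain R]

theorem FractionalIdeal.mul_one_div_of_isUnit {I : FractionalIdeal R⁰ K} (hI : IsUnit I) :
    I * (1 / I) = 1 :=
  mul_div_self_cancel_iff.2 ⟨↑hI.unit⁻¹, hI.mul_val_inv⟩

theorem FractionalIdeal.one_div_one_div_of_isUnit {I : FractionalIdeal R⁰ K} (hI : IsUnit I) :
    1 / (1 / I) = I :=
  (eq_one_div_of_mul_eq_one_right _ _ (mul_comm I _ ▸ mul_one_div_of_isUnit hI)).symm

theorem FractionalIdeal.eq_one_of_isUnit_of_one_div_eq_one {I : FractionalIdeal R⁰ K}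
    (hI : IsUnit I) (h : 1 / I = 1) : I = 1 := by
  rw [← one_div_one_div_of_isUnit hI, h, FractionalIdeal.div_one]

theorem FractionalIdeal.one_div_le_one_of_one_le {I : FractionalIdeal R⁰ K} (hI : 1 ≤ I) :
    1 / I ≤ 1 := by
  have hI0 : I ≠ 0 := ne_zero_of_lt (lt_of_lt_of_le zero_lt_one hI)
  intro y hy
  simpa using (mem_div_iff_of_ne_zero hI0).1 hy 1 (hI (one_mem_one _))

theorem IsInvertibleIdeal.isDivisorial {I : Ideal R} (hI : IsInvertibleIdeal R I) :
    IsDivisorial R I :=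
  one_div_one_div_of_isUnit hI

theorem not_isInvertibleIdeal_of_mul_self_eq {M : Ideal R} (hM : M ≠ ⊤) (hid : M * M = M) :
    ¬ IsInvertibleIdeal R M := by
  intro hu
  have h : (M : FractionalIdeal R⁰ K) * M = M * 1 := by rw [mul_one, ← coeIdeal_mul, hid]
  exact hM ((coeIdeal_eq_one.1 (hu.mul_left_cancel h)).trans Ideal.one_eq_top)

theorem IsPrufer.isUnit_one_sup_spanSingleton (hR : IsPrufer R) (x : K) :
    IsUnit (1 ⊔ spanSingleton R⁰ x : FractionalIdeal R⁰ K) := by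
  obtain ⟨a, s, hs, rfl⟩ := IsFractionRing.div_surjective R x
  have hs0 : algebraMap R K s ≠ 0 := IsFractionRing.to_map_ne_zero_of_mem_nonZeroDivisors hs
  have hspan : ((Ideal.span {s, a} : Ideal R) : FractionalIdeal R⁰ K) =
      spanSingleton R⁰ (algebraMap R K s) * (1 ⊔ spanSingleton R⁰ (algebraMap R K a /
        algebraMap R K s)) := by
    rw [Ideal.span_insert, coeIdeal_sup, coeIdeal_span_singleton, coeIdeal_span_singleton,
      sup_eq_add, mul_add, mul_one, spanSingleton_mul_spanSingleton, mul_div_cancel₀ _ hs0]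
  have hne : Ideal.span {s, a} ≠ ⊥ := fun h =>
    nonZeroDivisors.coe_ne_zero ⟨s, hs⟩
      ((Submodule.mem_bot R).1 (h ▸ Ideal.subset_span (Set.mem_insert s {a})))
  have hu : IsUnit ((Ideal.span {s, a} : Ideal R) : FractionalIdeal R⁰ K) :=
    hR _ hne (Submodule.fg_span (Set.toFinite _))
  rw [hspan] at hu
  exact isUnit_of_mul_isUnit_right hu

theorem IsPrufer.one_div_eq_one_of_isMaximal (hR : IsPrufer R) {M : Ideal R} (hM : M.IsMaximal)
    (hM0 : M ≠ ⊥) (hMinv : ¬ IsInvertibleIdeal R M) :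
    1 / (M : FractionalIdeal R⁰ K) = 1 := by
  have hM0' : (M : FractionalIdeal R⁰ K) ≠ 0 := coeIdeal_ne_zero.2 hM0
  refine le_antisymm (fun x hx => ?_)
    ((le_div_iff_mul_le hM0').2 ((one_mul _).trans_le coeIdeal_le_one))
  have hIu := hR.isUnit_one_sup_spanSingleton x
  have hMI : (M : FractionalIdeal R⁰ K) * (1 ⊔ spanSingleton R⁰ x) ≤ 1 := by
    rw [sup_eq_add, mul_add, mul_one, ← sup_eq_add]
    exact sup_le coeIdeal_le_one <| mul_comm (spanSingleton R⁰ x) M ▸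
      (le_div_iff_mul_le hM0').1 (spanSingleton_le_iff_mem.2 hx)
  rcases eq_coeIdeal_or_eq_one_of_le hM ((le_div_iff_mul_le hIu.ne_zero).2 hMI)
      (one_div_le_one_of_one_le le_sup_left) with h | h
  · refine absurd ?_ hMinv
    rw [IsInvertibleIdeal, ← h]
    exact IsUnit.of_mul_eq_one _ ((mul_comm _ _).trans (mul_one_div_of_isUnit hIu))
  · rw [← eq_one_of_isUnit_of_one_div_eq_one hIu h]
    exact (le_sup_right : spanSingleton R⁰ x ≤ _) (mem_spanSingleton_self _ x)

theorem not_isDivisorial_of_one_div_eq_one {M : Ideal R} (hM : M ≠ ⊤)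
    (h : 1 / (M : FractionalIdeal R⁰ K) = 1) : ¬ IsDivisorial R M := by
  intro hdiv
  rw [IsDivisorial, h, FractionalIdeal.div_one, eq_comm, coeIdeal_eq_one] at hdiv
  exact hM (hdiv.trans Ideal.one_eq_top)

end

/-- A branched idempotent maximal ideal of a Prüfer domain that is the radical of a
finitely generated ideal is not divisorial, but has a divisorial proper primary ideal. -/
theorem maximal_branched_idempotent_sharp (R : Type*) [CommRing R] [IsDomain R]
    (hR : IsPrufer R) (M : Ideal R) (hM : M.IsMaximal)
    (hbr : ∃ Q : Ideal R, Q.IsPrimary ∧ Q.radical = M ∧ Q ≠ M)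
    (hid : M * M = M)
    (hrad : ∃ B : Ideal R, B.FG ∧ B.radical = M) :
    ¬ IsDivisorial R M ∧
      ∃ Q : Ideal R, Q.IsPrimary ∧ Q.radical = M ∧ Q < M ∧ IsDivisorial R Q := by
  obtain ⟨Q, -, hQrad, hQM⟩ := hbr
  obtain ⟨B, hBfg, hBrad⟩ := hrad
  have hM0 : M ≠ ⊥ := by
    rintro rfl
    exact hQM (le_bot_iff.1 (hQrad ▸ Ideal.le_radical))
  have hMinv : ¬ IsInvertibleIdeal R M := not_isInvertibleIdeal_of_mul_self_eq hM.ne_top hid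
  refine ⟨not_isDivisorial_of_one_div_eq_one hM.ne_top
    (hR.one_div_eq_one_of_isMaximal hM hM0 hMinv),
    B, Ideal.isPrimary_of_isMaximal_radical (hBrad ▸ hM), hBrad, ?_⟩
  have hB0 : B ≠ ⊥ := fun h => hM0 (by rw [← hBrad, h, Ideal.radical_bot_of_isReduced])
  have hBinv : IsInvertibleIdeal R B := hR B hB0 hBfg
  exact ⟨lt_of_le_of_ne (hBrad ▸ Ideal.le_radical) fun h => hMinv (h ▸ hBinv),
    hBinv.isDivisorial⟩
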